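/- Let B be the 3×3 matrix h·[[0,1,0],[v²-u², 2u, 0],[((γ-1)/2)u³ - uH, H - (γ-1)u² - v², γu]] where h, u, v, H are real numbers with v > 0 and H = γE/ρ - ((γ-1)/2)u² for some ρ > 0, E with γ(γ-1)(E/ρ - u²/2) > 0. Then the eigenvalues of B are h(u+v), γhu, and h(u-v). -/
import Mathlib


open Matrix

/-- The eigenvalues of the source linearization matrix `B = h·g_U` are
`h(u+v)`, `γhu`, and `h(u-v)`. -/
theorem source_matrix_eigenvalues
    (γ : ℝ) (hγ1 : 1 < γ) (hγ2 : γ < 5/3)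
    (h u v ρ E H : ℝ) (hv : 0 < v) (hρ : 0 < ρ)
    (hc2 : 0 < γ * (γ - 1) * (E / ρ - u ^ 2 / 2))
    (hH : H = γ * E / ρ - (γ - 1) / 2 * u ^ 2)
    (B : Matrix (Fin 3) (Fin 3) ℝ)
    (hB : B = h • !![0, 1, 0;
                    v ^ 2 - u ^ 2, 2 * u, 0;
                    (γ - 1) / 2 * u ^ 3 - u * H, H - (γ - 1) * u ^ 2 - v ^ 2, γ * u]) :
    ∀ lam : ℝ, (B - lam • (1 : Matrix (Fin 3) (Fin 3) ℝ)).det = 0 ↔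
      lam = h * (u + v) ∨ lam = γ * h * u ∨ lam = h * (u - v) := by
  intro lam
  have hdet : (B - lam • (1 : Matrix (Fin 3) (Fin 3) ℝ)).det =
      (γ * h * u - lam) * ((lam - h * (u + v)) * (lam - h * (u - v))) := by
    subst hB
    simp [Matrix.det_fin_three, Matrix.smul_apply, Matrix.sub_apply, Matrix.one_apply]
    ring
  rw [hdet, mul_eq_zero, mul_eq_zero, sub_eq_zero, sub_eq_zero, sub_eq_zero]
  tauto
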